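/- In the Horn-theory reduction from CNF satisfiability (with rules P_i ∧ N_i → A, P_i → C_j for positive occurrences, N_i → C_j for negative occurrences, and X ∧ C₁ ∧ … ∧ C_m → A, over facts F = {X, P₁, …, P_n, N₁, …, N_n}): if φ is unsatisfiable, then every minimal support S ⊆ F for A contains {P_i, N_i} for some i and does not contain X. -/
import Mathlib


/-- Atoms of the Horn theory in the SAT reduction. -/
inductive SatAtom (n m : ℕ) where
  | X : SatAtom n m
  | A : SatAtom n m
  | P : Fin n → SatAtom n m
  | N : Fin n → SatAtom n m
  | C : Fin m → SatAtom n m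
deriving DecidableEq

/-- Propositional Horn entailment via forward chaining (closure characterization). -/
def Horn.entails {α : Type} (T : Set (Finset α × α)) (S : Set α) (a : α) : Prop :=
  ∀ M : Set α, S ⊆ M → (∀ r ∈ T, (↑r.1 : Set α) ⊆ M → r.2 ∈ M) → a ∈ M

open SatAtom in
/-- The Horn theory of the reduction: `P_i ∧ N_i → A`; `P_i → C_j` when `v_i ∈ c_j`;
`N_i → C_j` when `¬v_i ∈ c_j`; `X ∧ C_1 ∧ ⋯ ∧ C_m → A`.
Clause `c_j` has positive literals `pos j` and negative literals `neg j`. -/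
def satTheory (n m : ℕ) (pos neg : Fin m → Finset (Fin n)) :
    Set (Finset (SatAtom n m) × SatAtom n m) :=
  { r | (∃ i, r = ({P i, N i}, A))
      ∨ (∃ i j, i ∈ pos j ∧ r = ({P i}, C j))
      ∨ (∃ i j, i ∈ neg j ∧ r = ({N i}, C j))
      ∨ r = (insert X (Finset.univ.image C), A) }

open SatAtom in
/-- The input facts `F = {X} ∪ {P_i} ∪ {N_i}`. -/
def satFacts (n m : ℕ) : Finset (SatAtom n m) :=
  insert X (Finset.univ.image P ∪ Finset.univ.image N)

/-- Satisfiability of the CNF `φ = c_1 ∧ ⋯ ∧ c_m`. -/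
def cnfSat (n m : ℕ) (pos neg : Fin m → Finset (Fin n)) : Prop :=
  ∃ σ : Fin n → Bool, ∀ j, (∃ i ∈ pos j, σ i = true) ∨ (∃ i ∈ neg j, σ i = false)

/-- If `φ` is unsatisfiable, every minimal support `S ⊆ F` for `A` contains
`{P_i, N_i}` for some `i` and does not contain `X`. -/
theorem stmt3 (n m : ℕ) (pos neg : Fin m → Finset (Fin n))
    (hunsat : ¬ cnfSat n m pos neg) :
    ∀ S ⊆ satFacts n m,
      Horn.entails (satTheory n m pos neg) ↑S SatAtom.A →
      (∀ S' ⊂ S, ¬ Horn.entails (satTheory n m pos neg) ↑S' SatAtom.A) →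
      (∃ i, SatAtom.P i ∈ S ∧ SatAtom.N i ∈ S) ∧ SatAtom.X ∉ S := by
  intro S hSF hent hmin
  classical
  have hpair : ∃ i, SatAtom.P i ∈ S ∧ SatAtom.N i ∈ S := by
    by_contra hno
    push_neg at hno
    -- Build a closed model not containing A
    set M : Set (SatAtom n m) :=
      ↑S ∪ {a | ∃ j, a = SatAtom.C j ∧
        ((∃ i ∈ pos j, SatAtom.P i ∈ S) ∨ (∃ i ∈ neg j, SatAtom.N i ∈ S))} with hM
    have hAM : SatAtom.A ∈ M := by
      apply hent M (Set.subset_union_left)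
      rintro ⟨prem, concl⟩ hr hprem
      rcases hr with ⟨i, hi⟩ | ⟨i, j, hij, hr⟩ | ⟨i, j, hij, hr⟩ | hr
      · -- {P i, N i} → A : impossible since no pair
        exfalso
        injection hi with h1 h2
        subst h1
        have hP : SatAtom.P i ∈ M := hprem (by simp)
        have hN : SatAtom.N i ∈ M := hprem (by simp)
        have hPS : SatAtom.P i ∈ S := by
          rcases hP with h | ⟨j, hj, _⟩
          · exact_mod_cast h
          · cases hj
        have hNS : SatAtom.N i ∈ S := by
          rcases hN with h | ⟨j, hj, _⟩
          · exact_mod_cast h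
          · cases hj
        exact hno i hPS hNS
      · injection hr with h1 h2
        subst h1; subst h2
        have hP : SatAtom.P i ∈ M := hprem (by simp)
        have hPS : SatAtom.P i ∈ S := by
          rcases hP with h | ⟨j', hj', _⟩
          · exact_mod_cast h
          · cases hj'
        exact Or.inr ⟨j, rfl, Or.inl ⟨i, hij, hPS⟩⟩
      · injection hr with h1 h2
        subst h1; subst h2
        have hN : SatAtom.N i ∈ M := hprem (by simp)
        have hNS : SatAtom.N i ∈ S := by
          rcases hN with h | ⟨j', hj', _⟩
          · exact_mod_cast h
          · cases hj'
        exact Or.inr ⟨j, rfl, Or.inr ⟨i, hij, hNS⟩⟩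
      · -- X rule: all C j in M gives satisfiability, contradiction
        exfalso
        injection hr with h1 h2
        subst h1
        apply hunsat
        refine ⟨fun i => decide (SatAtom.P i ∈ S), fun j => ?_⟩
        have hC : SatAtom.C j ∈ M := by
          apply hprem
          simp
        rcases hC with h | ⟨j', hj', hsat⟩
        · exfalso
          have := hSF (by exact_mod_cast h)
          simp [satFacts] at this
        · have : j' = j := by cases hj'; rfl
          subst this
          rcases hsat with ⟨i, hi, hiS⟩ | ⟨i, hi, hiS⟩
          · exact Or.inl ⟨i, hi, by simp [hiS]⟩
          · refine Or.inr ⟨i, hi, ?_⟩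
            simp only [decide_eq_false_iff_not]
            exact fun hP => hno i hP hiS
    rcases hAM with h | ⟨j, hj, _⟩
    · have := hSF (by exact_mod_cast h)
      simp [satFacts] at this
    · cases hj
  refine ⟨hpair, ?_⟩
  intro hX
  obtain ⟨i, hPi, hNi⟩ := hpair
  apply hmin (S.erase SatAtom.X)
  · exact Finset.erase_ssubset hX
  · intro M hSM hcl
    have hP : SatAtom.P i ∈ M := hSM (by simp [Finset.mem_erase, hPi])
    have hN : SatAtom.N i ∈ M := hSM (by simp [Finset.mem_erase, hNi])
    exact hcl ({SatAtom.P i, SatAtom.N i}, SatAtom.A) (Or.inl ⟨i, rfl⟩)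
      (by intro a ha; simp at ha; rcases ha with h | h <;> subst h <;> assumption)
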